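/- arXiv:1007.3247 — 9 statements merged into one kernel-verified Lean document; each statement's English description precedes it below -/
import Mathlib

section
/- The Lie algebra Witt(A) = {f∂ : f ∈ A} with bracket [f∂, g∂] = (fg' - gf')∂ is self-centralizing: for any nonzero f∂, the centralizer C(f∂) = {g∂ : [f∂, g∂] = 0} is one-dimensional over k. -/
/-!
If `f` and `g` have orders `m` and `n`, the lowest possibly nonzero coefficient of `f g' - g f'`
sits at `X^(m+n-1)` and equals `(n - m) f_m g_n`. In characteristic zero, a nonzero `g` commuting
with `f` therefore has the same order as `f`. Applying this to `g - c f`, where `c` is chosen to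
cancel the coefficient of `X^m`, forces `g = c f`.
-/

namespace HahnSeries

variable {Γ R : Type*} [AddCommMonoid Γ] [LinearOrder Γ] [IsOrderedCancelAddMonoid Γ]
  [NonUnitalNonAssocSemiring R]

theorem coeff_mul_add_of_coeff_eq_zero_of_lt {x y : R⟦Γ⟧} {a b : Γ}
    (hx : ∀ i < a, x.coeff i = 0) (hy : ∀ j < b, y.coeff j = 0) :
    (x * y).coeff (a + b) = x.coeff a * y.coeff b := by
  rw [coeff_mul, Finset.sum_eq_single (a, b)]
  · rintro ⟨i, j⟩ hij hne
    obtain ⟨hxi, hyj, hij⟩ := Finset.mem_antidiagonal.mp hij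
    have hai : a ≤ i := not_lt.mp fun h ↦ hxi (hx i h)
    have hbj : b ≤ j := not_lt.mp fun h ↦ hyj (hy j h)
    obtain ⟨rfl, rfl⟩ := (add_eq_add_iff_eq_and_eq hai hbj).mp hij.symm
    exact absurd rfl hne
  · intro hab
    by_cases hxa : x.coeff a = 0
    · rw [hxa, zero_mul]
    by_cases hyb : y.coeff b = 0
    · rw [hyb, mul_zero]
    exact absurd (Finset.mem_antidiagonal.mpr ⟨hxa, hyb, rfl⟩) hab

end HahnSeries

open HahnSeries LaurentSeries

namespace LaurentSeries

theorem coeff_derivative {R V : Type*} [Semiring R] [AddCommGroup V] [Module R V]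
    (f : LaurentSeries V) (n : ℤ) :
    (derivative R f).coeff n = (n + 1) • f.coeff (n + 1) := by
  simp

theorem coeff_derivative_eq_zero_of_lt_order {R V : Type*} [Semiring R] [AddCommGroup V]
    [Module R V] {f : LaurentSeries V} {n : ℤ} (hn : n < f.order - 1) :
    (derivative R f).coeff n = 0 := by
  rw [coeff_derivative, coeff_eq_zero_of_lt_order (by omega), smul_zero]

theorem algebraMap_mul_eq_smul {R : Type*} [CommSemiring R] (c : R) (x : LaurentSeries R) :
    algebraMap R (LaurentSeries R) c * x = c • x := by
  rw [algebraMap_apply', PowerSeries.algebraMap_apply, Algebra.algebraMap_self, RingHom.id_apply,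
    ofPowerSeries_C, C_mul_eq_smul]

section CommRing

variable {R : Type*} [CommRing R]

theorem coeff_mul_derivative_sub_mul_derivative (x y : LaurentSeries R) :
    (x * derivative R y - y * derivative R x).coeff (x.order + y.order - 1) =
      ((y.order - x.order : ℤ) : R) * x.leadingCoeff * y.leadingCoeff := by
  have hlow (u v : LaurentSeries R) : (u * derivative R v).coeff (u.order + v.order - 1) =
      (v.order : R) * u.leadingCoeff * v.leadingCoeff := by
    rw [add_sub_assoc, coeff_mul_add_of_coeff_eq_zero_of_lt (fun _ ↦ coeff_eq_zero_of_lt_order)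
      (fun _ ↦ coeff_derivative_eq_zero_of_lt_order), coeff_derivative, sub_add_cancel,
      zsmul_eq_mul, leadingCoeff_eq, leadingCoeff_eq]
    ring
  rw [coeff_sub, hlow, add_comm, hlow]
  push_cast
  ring

theorem order_eq_of_mul_derivative_eq [IsDomain R] [CharZero R] {x y : LaurentSeries R}
    (hx : x ≠ 0) (hy : y ≠ 0) (h : x * derivative R y = y * derivative R x) :
    y.order = x.order := by
  have hcoeff := coeff_mul_derivative_sub_mul_derivative x y
  rw [h, sub_self, coeff_zero, eq_comm, mul_assoc, mul_eq_zero] at hcoeff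
  refine sub_eq_zero.mp (Int.cast_eq_zero.mp (hcoeff.resolve_right ?_))
  exact mul_ne_zero (leadingCoeff_ne_zero.mpr hx) (leadingCoeff_ne_zero.mpr hy)

end CommRing

theorem exists_eq_smul_of_mul_derivative_eq {k : Type*} [Field k] [CharZero k]
    {f g : LaurentSeries k} (hf : f ≠ 0) (h : f * derivative k g = g * derivative k f) :
    ∃ c : k, g = c • f := by
  set c := g.coeff f.order / f.leadingCoeff
  refine ⟨c, sub_eq_zero.mp (by_contra fun hne ↦ ?_)⟩
  have hcomm : f * derivative k (g - c • f) = (g - c • f) * derivative k f := by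
    rw [map_sub, map_smul, ← algebraMap_mul_eq_smul, ← algebraMap_mul_eq_smul]
    linear_combination h
  apply leadingCoeff_ne_zero.mpr hne
  rw [leadingCoeff_eq, order_eq_of_mul_derivative_eq hf hne hcomm, coeff_sub, coeff_smul,
    smul_eq_mul, ← leadingCoeff_eq, div_mul_cancel₀ _ (leadingCoeff_ne_zero.mpr hf), sub_self]

end LaurentSeries

theorem stmt1_general {k : Type} [Field k] [CharZero k]
    (A : Subalgebra k (LaurentSeries k))
    (f : LaurentSeries k) (hfA : f ∈ A) (hf : f ≠ 0) :
    {g : LaurentSeries k | g ∈ A ∧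
        f * LaurentSeries.derivative k g - g * LaurentSeries.derivative k f = 0}
      = {g : LaurentSeries k | ∃ c : k, g = c • f} := by
  ext g
  constructor
  · rintro ⟨-, hfg⟩
    exact exists_eq_smul_of_mul_derivative_eq hf (sub_eq_zero.mp hfg)
  · rintro ⟨c, rfl⟩
    refine ⟨algebraMap_mul_eq_smul c f ▸ A.mul_mem (A.algebraMap_mem c) hfA, ?_⟩
    rw [map_smul, ← algebraMap_mul_eq_smul, ← algebraMap_mul_eq_smul]
    ring

/-- `Witt(A)` is self-centralizing: for a stable algebra `A` (subalgebra of the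
Laurent series field closed under formal differentiation) and nonzero `f ∈ A`,
the centralizer of `f∂` in `Witt(A)` is exactly the one-dimensional space of
scalar multiples of `f`. -/
theorem stmt1 {k : Type} [Field k] [CharZero k]
    (A : Subalgebra k (LaurentSeries k))
    (hA : ∀ f ∈ A, LaurentSeries.derivative k f ∈ A)
    (f : LaurentSeries k) (hfA : f ∈ A) (hf : f ≠ 0) :
    {g : LaurentSeries k | g ∈ A ∧
        f * LaurentSeries.derivative k g - g * LaurentSeries.derivative k f = 0}
      = {g : LaurentSeries k | ∃ c : k, g = c • f} :=
  stmt1_general A f hfA hf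
end

section
/- If L is a self-centralizing Lie algebra possessing a nontrivial ideal I of finite dimension n > 1, then dim(L) ≤ n². -/
/-! A nonzero element of `L` that acts trivially on `I` centralizes all of `I`, so in a
self-centralizing Lie algebra the adjoint action on an ideal of dimension `n > 1` is faithful
and `L` embeds into `End I`, of dimension `n²`. -/

/-- The centralizer of an element of a Lie algebra, as a submodule. -/
def lieCentralizer (k : Type) {L : Type} [Field k] [LieRing L] [LieAlgebra k L]
    (l : L) : Submodule k L where
  carrier := {x | ⁅l, x⁆ = 0}
  add_mem' := by
    intro a b ha hb
    simp only [Set.mem_setOf_eq] at *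
    rw [lie_add, ha, hb, add_zero]
  zero_mem' := by simp
  smul_mem' := by
    intro c x hx
    simp only [Set.mem_setOf_eq] at *
    rw [lie_smul, hx, smul_zero]

section SelfCentralizing

attribute [local instance 100] LieRing.ofAssociativeRing

variable {k L : Type} [Field k] [LieRing L] [LieAlgebra k L]

theorem LieModule.rank_le_finrank_sq_of_isFaithful {M : Type} [AddCommGroup M] [Module k M]
    [LieRingModule L M] [LieModule k L M] [LieModule.IsFaithful k L M] [Module.Finite k M] :
    Module.rank k L ≤ (Module.finrank k M : Cardinal) ^ 2 :=
  calc Module.rank k L ≤ Module.rank k (Module.End k M) :=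
        (LieModule.toEnd k L M).toLinearMap.rank_le_of_injective
          LieModule.IsFaithful.injective_toEnd
    _ = (Module.finrank k M : Cardinal) ^ 2 := by
        rw [← Module.finrank_eq_rank, Module.finrank_linearMap]
        push_cast
        ring

theorem LieIdeal.le_lieCentralizer_of_forall_lie_eq_zero {I : LieIdeal k L} {x : L}
    (hx : ∀ m : I, ⁅x, m⁆ = 0) : (I : Submodule k L) ≤ lieCentralizer k x :=
  fun y hy => congrArg Subtype.val (hx ⟨y, hy⟩)

theorem LieIdeal.isFaithful_of_one_lt_finrank
    (hsc : ∀ l : L, l ≠ 0 → Module.rank k (lieCentralizer k l) = 1)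
    (I : LieIdeal k L) [Module.Finite k I] (hI : 1 < Module.finrank k I) :
    LieModule.IsFaithful k L I := by
  rw [LieModule.isFaithful_iff']
  intro x hx
  by_contra hx0
  have hle : Module.rank k I ≤ 1 := by
    rw [← hsc x hx0]
    exact Submodule.rank_mono (LieIdeal.le_lieCentralizer_of_forall_lie_eq_zero hx)
  rw [← Module.finrank_eq_rank] at hle
  exact absurd (Nat.cast_le_one.mp hle) (not_le.mpr hI)

end SelfCentralizing

theorem stmt3_general {k L : Type} [Field k] [LieRing L] [LieAlgebra k L]
    (hsc : ∀ l : L, l ≠ 0 → Module.rank k (lieCentralizer k l) = 1)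
    (I : LieIdeal k L)
    [Module.Finite k I] (n : ℕ) (hn : 1 < n) (hdim : Module.finrank k I = n) :
    Module.rank k L ≤ (n : Cardinal) ^ 2 := by
  have := I.isFaithful_of_one_lt_finrank hsc (hdim ▸ hn)
  exact hdim ▸ LieModule.rank_le_finrank_sq_of_isFaithful

/-- If a self-centralizing Lie algebra has a nontrivial ideal of finite dimension
`n > 1`, then `dim L ≤ n²`. -/
theorem stmt3 {k L : Type} [Field k] [CharZero k] [LieRing L] [LieAlgebra k L]
    (hsc : ∀ l : L, l ≠ 0 → Module.rank k (lieCentralizer k l) = 1)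
    (I : LieIdeal k L) (hI0 : I ≠ ⊥) (hIT : I ≠ ⊤)
    [Module.Finite k I] (n : ℕ) (hn : 1 < n) (hdim : Module.finrank k I = n) :
    Module.rank k L ≤ (n : Cardinal) ^ 2 :=
  stmt3_general hsc I n hn hdim
end

section
/- If L is a self-centralizing Lie algebra possessing an ideal of dimension 1, then dim(L) ≤ 2. -/
/-!
For `0 ≠ e ∈ I`, the map `ad e` sends `L` into the ideal `I` and its kernel is the centralizer
of `e`. Rank–nullity gives `dim L ≤ dim I + dim C(e) = 1 + 1`.
-/

theorem ker_ad_eq_lieCentralizer {k L : Type} [Field k] [LieRing L] [LieAlgebra k L] (e : L) :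
    LinearMap.ker (LieAlgebra.ad k L e) = lieCentralizer k e := by
  ext x
  simp [lieCentralizer]

theorem rank_le_rank_lieIdeal_add_rank_lieCentralizer {k L : Type} [Field k] [LieRing L]
    [LieAlgebra k L] (I : LieIdeal k L) {e : L} (he : e ∈ I) :
    Module.rank k L ≤ Module.rank k I + Module.rank k (lieCentralizer k e) := by
  let adIntoI : L →ₗ[k] I :=
    (LieAlgebra.ad k L e).codRestrict I.toSubmodule fun x => lie_mem_left k L I e x he
  have hker : LinearMap.ker adIntoI = lieCentralizer k e :=
    (LinearMap.ker_codRestrict _ _ _).trans (ker_ad_eq_lieCentralizer e)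
  rw [← LinearMap.rank_range_add_rank_ker adIntoI, hker]
  gcongr
  exact Submodule.rank_le _

theorem stmt4_general {k L : Type} [Field k] [LieRing L] [LieAlgebra k L]
    (hsc : ∀ l : L, l ≠ 0 → Module.rank k (lieCentralizer k l) = 1)
    (I : LieIdeal k L) (hdim : Module.finrank k I = 1) :
    Module.rank k L ≤ 2 := by
  have hrank : Module.rank k I = 1 := Module.rank_eq_one_iff_finrank_eq_one.mpr hdim
  obtain ⟨e, he⟩ : ∃ e : I, e ≠ 0 :=
    rank_pos_iff_exists_ne_zero.mp (by rw [hrank]; exact zero_lt_one)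
  have he_ne : (e : L) ≠ 0 := by simpa using he
  calc Module.rank k L ≤ Module.rank k I + Module.rank k (lieCentralizer k (e : L)) :=
        rank_le_rank_lieIdeal_add_rank_lieCentralizer I e.2
    _ = 2 := by rw [hrank, hsc _ he_ne, one_add_one_eq_two]

/-- If a self-centralizing Lie algebra has an ideal of dimension 1, then `dim L ≤ 2`. -/
theorem stmt4 {k L : Type} [Field k] [CharZero k] [LieRing L] [LieAlgebra k L]
    (hsc : ∀ l : L, l ≠ 0 → Module.rank k (lieCentralizer k l) = 1)
    (I : LieIdeal k L) [Module.Finite k I] (hdim : Module.finrank k I = 1) :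
    Module.rank k L ≤ 2 :=
  stmt4_general hsc I hdim
end

section
/- An infinite-dimensional self-centralizing Lie algebra does not possess any finite-dimensional nontrivial ideals. -/
/-- An infinite-dimensional self-centralizing Lie algebra has no finite-dimensional
nontrivial ideals. -/
theorem stmt5 {k L : Type} [Field k] [CharZero k] [LieRing L] [LieAlgebra k L]
    (hinf : ¬ Module.Finite k L)
    (hsc : ∀ l : L, l ≠ 0 → Module.rank k (lieCentralizer k l) = 1)
    (I : LieIdeal k L) (hfin : Module.Finite k I) :
    I = ⊥ ∨ I = ⊤ := by
  by_contra h
  push_neg at h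
  obtain ⟨hbot, -⟩ := h
  -- pick a nonzero element x of I
  obtain ⟨x, hxI, hx0⟩ : ∃ x ∈ I, x ≠ 0 := by
    by_contra hc
    push_neg at hc
    refine hbot (le_antisymm (fun y hy => ?_) bot_le)
    simp [LieSubmodule.mem_bot, hc y hy]
  -- the linear map l ↦ ⁅l, x⁆, viewed as a map into I
  let f : L →ₗ[k] I :=
    { toFun := fun l => ⟨⁅l, x⁆, I.lie_mem hxI⟩
      map_add' := fun a b => by ext; simp [add_lie]
      map_smul' := fun c a => by ext; simp [smul_lie] }
  have hker : LinearMap.ker f = lieCentralizer k x := by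
    ext l
    simp only [LinearMap.mem_ker, lieCentralizer, Submodule.mem_mk,
      AddSubmonoid.mem_mk, AddSubsemigroup.mem_mk, Set.mem_setOf_eq, f]
    constructor
    · intro hl
      have h1 : ⁅l, x⁆ = 0 := by simpa using congrArg Subtype.val hl
      rw [← lie_skew, h1, neg_zero]
    · intro hl
      ext
      have h1 : ⁅l, x⁆ = 0 := by rw [← lie_skew, hl, neg_zero]
      simpa using h1
  -- kernel is finite-dimensional (rank 1)
  have hkerfin : FiniteDimensional k (LinearMap.ker f) := by
    rw [hker]
    exact FiniteDimensional.of_rank_eq_one (hsc x hx0)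
  -- quotient by kernel embeds into I, so it's finite-dimensional
  have hquotfin : FiniteDimensional k (L ⧸ LinearMap.ker f) := by
    haveI : FiniteDimensional k I := hfin
    exact Module.Finite.equiv (f.quotKerEquivRange).symm
  have : IsNoetherian k L :=
    (isNoetherian_iff_submodule_quotient (LinearMap.ker f)).mpr
      ⟨inferInstance, inferInstance⟩
  haveI := this; exact hinf inferInstance
end

section
/- If L is a self-centralizing Lie algebra and α ∈ L, then the spectrum spec(α) = {a ∈ k : E_a(α) ≠ 0} is a pseudomonoid: 0 ∈ spec(α), and whenever a, b ∈ spec(α) with a ≠ b, also a + b ∈ spec(α). -/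
/-- In a (nonzero) self-centralizing Lie algebra, the spectrum of any element is a
pseudomonoid: it contains `0`, and is closed under sums of distinct elements. -/
theorem stmt9 {k L : Type} [Field k] [CharZero k] [LieRing L] [LieAlgebra k L]
    [Nontrivial L]
    (hsc : ∀ α β : L, LinearIndependent k ![α, β] → ⁅α, β⁆ ≠ 0)
    (α : L) (S : Set k)
    (hS : S = {a : k | ∃ x : L, x ≠ 0 ∧ ⁅α, x⁆ = a • x}) :
    (0 : k) ∈ S ∧ ∀ a ∈ S, ∀ b ∈ S, a ≠ b → a + b ∈ S := by
  subst hS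
  constructor
  · by_cases hα : α = 0
    · obtain ⟨x, hx⟩ := exists_ne (0 : L)
      exact ⟨x, hx, by simp [hα]⟩
    · exact ⟨α, hα, by simp⟩
  · rintro a ⟨x, hx, hax⟩ b ⟨y, hy, hby⟩ hab
    have hli : LinearIndependent k ![x, y] := by
      rw [LinearIndependent.pair_iff]
      intro s t hst
      have h1 : ⁅α, s • x + t • y⁆ = 0 := by rw [hst]; simp
      rw [lie_add, lie_smul, lie_smul, hax, hby, smul_smul, smul_smul] at h1
      have h2 : a • (s • x + t • y) = 0 := by rw [hst]; simp
      rw [smul_add, smul_smul, smul_smul] at h2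
      have h3 : (t * b - a * t) • y = 0 := by
        rw [sub_smul]
        have := congrArg₂ (· - ·) h1 h2
        simpa [mul_comm] using this
      have ht : t = 0 := by
        rcases smul_eq_zero.mp h3 with h | h
        · have : t * (b - a) = 0 := by linear_combination h
          rcases mul_eq_zero.mp this with h' | h'
          · exact h'
          · exact absurd (sub_eq_zero.mp h').symm hab
        · exact absurd h hy
      have hs : s = 0 := by
        rw [ht, zero_smul, add_zero] at hst
        rcases smul_eq_zero.mp hst with h | h
        · exact h
        · exact absurd h hx
      exact ⟨hs, ht⟩
    refine ⟨⁅x, y⁆, hsc x y hli, ?_⟩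
    rw [leibniz_lie, hax, hby, smul_lie, lie_smul, add_smul]
end

section
/- Let f∂ be a nonzero element of Witt(R), where R is the field of formal Laurent series over k. Then for every a ∈ k, the a-eigenspace of ad(f∂) is at most one-dimensional; moreover, if g∂ is a nonzero element of E_a(f∂), then g = fu where LD(u) = a/f. -/
/-!
The derivative of Laurent series satisfies the Leibniz rule (factor out `X ^ order` to reduce to
power series), so writing `h = g w` the eigenvalue equations for `g` and `h` give `f g w' = 0`,
i.e. `w' = 0`; in characteristic zero this makes `w` a constant. Likewise, writing `g = f u` gives `f g' - g f' = f² u'`, so `f u' = a u`.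
-/

open HahnSeries
open scoped PowerSeries

namespace LaurentSeries

section CommRing

variable {R : Type*} [CommRing R]

local notation "D" => derivative R

theorem derivative_coeff (f : R⸨X⸩) (n : ℤ) :
    (D f).coeff n = ((n : R) + 1) * f.coeff (n + 1) := by
  simp [zsmul_eq_mul]

theorem derivative_coe (p : R⟦X⟧) : D (p : R⸨X⸩) = (PowerSeries.derivative R p : R⸨X⸩) := by
  ext n
  rw [derivative_coeff]
  rcases n with m | _ | m
  · rw [Int.ofNat_eq_natCast, ← Nat.cast_succ, coeff_coe_powerSeries, coeff_coe_powerSeries,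
      PowerSeries.coeff_derivative]
    push_cast; ring
  · simp [PowerSeries.coeff_coe]
  · rw [PowerSeries.coeff_coe, PowerSeries.coeff_coe, if_pos (by omega), if_pos (by omega),
      mul_zero]

theorem derivative_single_mul (b : ℤ) (r : R) (y : R⸨X⸩) :
    D (single b r * y) = single (b - 1) ((b : R) * r) * y + single b r * D y := by
  have coeff_single_mul (c : ℤ) (s : R) (z : R⸨X⸩) (m : ℤ) :
      (single c s * z).coeff m = s * z.coeff (m - c) := by
    rw [← coeff_single_mul_add, sub_add_cancel]
  ext n
  rw [coeff_add, derivative_coeff, coeff_single_mul, coeff_single_mul, coeff_single_mul,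
    derivative_coeff, show n + 1 - b = n - (b - 1) by ring, show n - b + 1 = n - (b - 1) by ring]
  push_cast
  ring

theorem derivative_mul (x y : R⸨X⸩) : D (x * y) = D x * y + x * D y := by
  obtain ⟨a, p, rfl⟩ : ∃ (a : ℤ) (p : R⟦X⟧), x = single a 1 * (p : R⸨X⸩) :=
    ⟨_, _, (single_order_mul_powerSeriesPart x).symm⟩
  obtain ⟨b, q, rfl⟩ : ∃ (b : ℤ) (q : R⟦X⟧), y = single b 1 * (q : R⸨X⸩) :=
    ⟨_, _, (single_order_mul_powerSeriesPart y).symm⟩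
  rw [show single a 1 * (p : R⸨X⸩) * (single b 1 * (q : R⸨X⸩)) =
      single a 1 * (single b 1 * ((p * q : R⟦X⟧) : R⸨X⸩)) by push_cast; ring]
  simp only [derivative_single_mul, derivative_coe, Derivation.leibniz, smul_eq_mul]
  simp only [map_add, map_mul]
  ring

theorem eq_C_of_derivative_eq_zero [IsDomain R] [CharZero R] {w : R⸨X⸩} (hw : D w = 0) : w = C (w.coeff 0) := by
  ext n
  rcases eq_or_ne n 0 with rfl | hn
  · simp
  · have h := congrArg (HahnSeries.coeff · (n - 1)) hw
    simp only [derivative_coeff, coeff_zero, sub_add_cancel, Int.cast_sub, Int.cast_one,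
      mul_eq_zero, Int.cast_eq_zero, hn, false_or] at h
    simp [h, C_apply, hn]

end CommRing

end LaurentSeries

open LaurentSeries in
/-- For nonzero `f∂ ∈ Witt(R)` and `a ∈ k`, the `a`-eigenspace of `ad(f∂)` is at
most one-dimensional, and any nonzero eigenvector `g∂ ∈ E_a(f∂)` has `g = f·u`
with `LD(u) = a/f` (i.e. `f·u' = a·u`). -/
theorem stmt13 {k : Type} [Field k] [CharZero k]
    (f : LaurentSeries k) (hf : f ≠ 0) (a : k) :
    (∀ g h : LaurentSeries k, g ≠ 0 →
      f * LaurentSeries.derivative k g - g * LaurentSeries.derivative k f = a • g →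
      f * LaurentSeries.derivative k h - h * LaurentSeries.derivative k f = a • h →
      ∃ c : k, h = c • g) ∧
    (∀ g : LaurentSeries k, g ≠ 0 →
      f * LaurentSeries.derivative k g - g * LaurentSeries.derivative k f = a • g →
      ∃ u : LaurentSeries k, u ≠ 0 ∧ g = f * u ∧
        f * LaurentSeries.derivative k u = a • u) := by
  refine ⟨fun g h hg hg_eigen hh_eigen => ?_, fun g hg hg_eigen => ?_⟩
  · obtain ⟨w, rfl⟩ : ∃ w, h = g * w := ⟨h / g, (mul_div_cancel₀ h hg).symm⟩
    have hw : derivative k w = 0 := by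
      refine (mul_eq_zero.mp ?_).resolve_left (mul_ne_zero hf hg)
      rw [← C_mul_eq_smul] at hg_eigen hh_eigen
      rw [derivative_mul] at hh_eigen
      linear_combination hh_eigen - w * hg_eigen
    refine ⟨w.coeff 0, ?_⟩
    rw [← C_mul_eq_smul, mul_comm, ← eq_C_of_derivative_eq_zero hw]
  · obtain ⟨u, rfl⟩ : ∃ u, g = f * u := ⟨g / f, (mul_div_cancel₀ g hf).symm⟩
    refine ⟨u, right_ne_zero_of_mul hg, rfl, mul_left_cancel₀ hf ?_⟩
    rw [← C_mul_eq_smul] at hg_eigen ⊢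
    rw [derivative_mul] at hg_eigen
    linear_combination hg_eigen
end

section
/- Let G ⊆ k be a pseudomonoid with a weak order ⪯ (a translation-invariant linear order restricted from k). If G possesses a minimum element m, then either m = 0 or m is the unique negative element of G. Consequently, if G possesses both a minimum and a maximum element, then G has at most 3 elements. -/
/-! If `x ≺ 0` and `x ≠ m`, then `m + x ∈ G` while `m + x ⪯ m` by translation invariance, so
`m + x = m` by minimality of `m`, i.e. `x = 0`. Hence every nonzero negative element of `G` is the
minimum; dually every nonzero positive element is the maximum, since the maximum for `⪯` is the
minimum for the reversed order. -/

section

variable {k : Type*} [AddCancelCommMonoid k] {r : k → k → Prop} {G : Set k} {m x : k}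

theorem eq_of_rel_zero_of_forall_rel
    (hanti : ∀ a b, r a b → r b a → a = b) (htrans : ∀ a b c, r a b → r (a + c) (b + c))
    (hadd : ∀ a ∈ G, ∀ b ∈ G, a ≠ b → a + b ∈ G) (hm : m ∈ G) (hmin : ∀ y ∈ G, r m y)
    (hx : x ∈ G) (hx0 : x ≠ 0) (hneg : r x 0) : x = m := by
  by_contra hxm
  have hle : r (m + x) m := by simpa [add_comm] using htrans x 0 m hneg
  have hge : r m (m + x) := hmin _ (hadd m hm x hx (Ne.symm hxm))
  exact hx0 (by simpa using hanti _ _ hle hge)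

theorem eq_of_rel_zero_of_forall_rel_swap
    (hanti : ∀ a b, r a b → r b a → a = b) (htrans : ∀ a b c, r a b → r (a + c) (b + c))
    (hadd : ∀ a ∈ G, ∀ b ∈ G, a ≠ b → a + b ∈ G) (hm : m ∈ G) (hmax : ∀ y ∈ G, r y m)
    (hx : x ∈ G) (hx0 : x ≠ 0) (hpos : r 0 x) : x = m :=
  eq_of_rel_zero_of_forall_rel (r := flip r) (fun a b hab hba => hanti a b hba hab)
    (fun a b c => htrans b a c) hadd hm hmax hx hx0 hpos

end

theorem stmt17_general {k : Type} [Field k]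
    (r : k → k → Prop) (hlin : IsLinearOrder k r)
    (htrans : ∀ x y z : k, r x y → r (x + z) (y + z))
    (G : Set k)
    (hadd : ∀ a ∈ G, ∀ b ∈ G, a ≠ b → a + b ∈ G)
    (m : k) (hm : m ∈ G) (hmin : ∀ x ∈ G, r m x) :
    (m = 0 ∨ (m ≠ 0 ∧ ∀ x ∈ G, x ≠ 0 → r x 0 → x = m)) ∧
    (∀ M ∈ G, (∀ x ∈ G, r x M) → G ⊆ {m, 0, M}) := by
  have hanti : ∀ a b, r a b → r b a → a = b := hlin.antisymm
  have hneg : ∀ x ∈ G, x ≠ 0 → r x 0 → x = m := fun _ =>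
    eq_of_rel_zero_of_forall_rel hanti htrans hadd hm hmin
  refine ⟨(em (m = 0)).imp_right fun hm0 => ⟨hm0, hneg⟩, fun M hM hmax g hg => ?_⟩
  have hpos := eq_of_rel_zero_of_forall_rel_swap hanti htrans hadd hM hmax hg
  by_cases hg0 : g = 0
  · simp [hg0]
  rcases hlin.total g 0 with hg' | hg'
  · simp [hneg g hg hg0 hg']
  · simp [hpos hg0 hg']

/-- Let `G ⊆ k` be a pseudomonoid with a weak order. If `G` has a minimum element
`m`, then `m = 0` or `m` is the unique negative element of `G`; and if `G` also has
a maximum element `M`, then `G ⊆ {m, 0, M}` (so `G` has at most 3 elements). -/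
theorem stmt17 {k : Type} [Field k] [CharZero k]
    (r : k → k → Prop) (hlin : IsLinearOrder k r)
    (htrans : ∀ x y z : k, r x y → r (x + z) (y + z))
    (G : Set k) (h0 : (0 : k) ∈ G)
    (hadd : ∀ a ∈ G, ∀ b ∈ G, a ≠ b → a + b ∈ G)
    (m : k) (hm : m ∈ G) (hmin : ∀ x ∈ G, r m x) :
    (m = 0 ∨ (m ≠ 0 ∧ ∀ x ∈ G, x ≠ 0 → r x 0 → x = m)) ∧
    (∀ M ∈ G, (∀ x ∈ G, r x M) → G ⊆ {m, 0, M}) :=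
  stmt17_general r hlin htrans G hadd m hm hmin
end

section
/- A pseudomonoid G ⊆ k that is an additive subgroup of k is simple: its only ideal subsets are ∅ and G. In particular, if I is an ideal subset of a pseudomonoid G and 0 ∈ I, then I = G; and if I contains an element x with -x ∈ G, then I = G. -/
/-- A subset `I` of a pseudomonoid `G ⊆ k` is an ideal subset if `I ⊆ G` and for
all `a ∈ I` and `b ∈ G` with `b ≠ a`, `a + b ∈ I`. -/
def IsIdealSubset {k : Type} [Field k] (G I : Set k) : Prop :=
  I ⊆ G ∧ ∀ a ∈ I, ∀ b ∈ G, b ≠ a → a + b ∈ I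

/-- For a pseudomonoid `G ⊆ k`: any ideal subset containing `0` equals `G`; any
ideal subset containing an element whose negative lies in `G` equals `G`; and if
`G` is an additive subgroup of `k`, then `G` is simple as a pseudomonoid: its only
ideal subsets are `∅` and `G`. -/
theorem stmt18 {k : Type} [Field k] [CharZero k]
    (G : Set k) (h0 : (0 : k) ∈ G)
    (hadd : ∀ a ∈ G, ∀ b ∈ G, a ≠ b → a + b ∈ G) :
    (∀ I : Set k, IsIdealSubset G I → (0 : k) ∈ I → I = G) ∧
    (∀ I : Set k, IsIdealSubset G I → ∀ x ∈ I, -x ∈ G → I = G) ∧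
    ((∀ a ∈ G, -a ∈ G) → (∀ a ∈ G, ∀ b ∈ G, a + b ∈ G) →
      ∀ I : Set k, IsIdealSubset G I → I = ∅ ∨ I = G) := by
  have part1 : ∀ I : Set k, IsIdealSubset G I → (0 : k) ∈ I → I = G := by
    intro I ⟨hIG, hI⟩ h0I
    apply Set.Subset.antisymm hIG
    intro b hb
    by_cases hb0 : b = 0
    · rwa [hb0]
    · have := hI 0 h0I b hb hb0
      simpa using this
  refine ⟨part1, ?_, ?_⟩
  · intro I hI x hx hnx
    by_cases hxx : -x = x
    · have hx0 : x = 0 := by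
        have : (2 : k) * x = 0 := by ring_nf; linear_combination -hxx
        have h2 : (2 : k) ≠ 0 := two_ne_zero
        exact (mul_eq_zero.mp this).resolve_left h2
      exact part1 I hI (hx0 ▸ hx)
    · have h0I : (0 : k) ∈ I := by
        have := hI.2 x hx (-x) hnx hxx
        simpa using this
      exact part1 I hI h0I
  · intro hneg _ I hI
    rcases Set.eq_empty_or_nonempty I with h | ⟨x, hx⟩
    · exact Or.inl h
    · right
      have hxG : x ∈ G := hI.1 hx
      have h0I : (0 : k) ∈ I := by
        by_cases hxx : -x = x
        · have hx0 : x = 0 := by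
            have : (2 : k) * x = 0 := by linear_combination -hxx
            exact (mul_eq_zero.mp this).resolve_left two_ne_zero
          rwa [hx0] at hx
        · have := hI.2 x hx (-x) (hneg x hxG) hxx
          simpa using this
      exact part1 I hI h0I
end

section
/- The pseudomonoid G = {-1, 0, 1, 2, ...} of integers ≥ -1 (viewed inside a field k of characteristic zero) is not self-containing: if a ∈ k is nonzero and aG ⊆ G, then a = 1. Likewise, any subfield E of k is not self-containing as a pseudomonoid. -/
/-- The pseudomonoid `G = {-1, 0, 1, 2, ...}` (integers `≥ -1` inside a field of
characteristic zero) is not self-containing: if `a ≠ 0` and `aG ⊆ G`, then `a = 1`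
(so `aG = G`). Likewise any subfield `E` of `k` is not self-containing: if `a ≠ 0`
and `aE ⊆ E`, then `aE = E`. -/
theorem stmt19 {k : Type} [Field k] [CharZero k] (E : Subfield k) :
    (∀ a : k, a ≠ 0 →
      (∀ x : k, (∃ n : ℤ, -1 ≤ n ∧ x = (n : k)) →
        ∃ m : ℤ, -1 ≤ m ∧ a * x = (m : k)) →
      a = 1) ∧
    (∀ a : k, a ≠ 0 → (∀ x ∈ E, a * x ∈ E) →
      (fun x => a * x) '' (E : Set k) = (E : Set k)) := by
  constructor
  · intro a ha h
    obtain ⟨m, hm1, hm⟩ := h 1 ⟨1, by norm_num⟩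
    rw [mul_one] at hm
    obtain ⟨p, hp1, hp⟩ := h (-1) ⟨-1, by norm_num⟩
    rw [hm] at hp
    have hpm : (p : k) = ((-m : ℤ) : k) := by push_cast; linear_combination -hp
    have hpm' : p = -m := Int.cast_injective hpm
    have hm0 : m ≠ 0 := by
      rintro rfl; exact ha (by simpa using hm)
    -- m ≥ -1, -m ≥ -1 so m ∈ {-1, 1}
    have hmle : m ≤ 1 := by omega
    interval_cases m
    · -- m = -1 : a = -1, then a * 2 = -2 not in G
      obtain ⟨q, hq1, hq⟩ := h 2 ⟨2, by norm_num⟩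
      rw [hm] at hq
      have : (q : k) = ((-2 : ℤ) : k) := by push_cast; push_cast at hq; linear_combination -hq
      have := Int.cast_injective this
      omega
    · omega
    · simpa using hm
  · intro a ha h
    have haE : a ∈ E := by simpa using h 1 E.one_mem
    ext y
    constructor
    · rintro ⟨x, hx, rfl⟩; exact h x hx
    · intro hy
      exact ⟨a⁻¹ * y, E.mul_mem (E.inv_mem haE) hy, by field_simp⟩
end
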